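/- Let (W,S) be an arbitrary Coxeter system and let w ∈ W. Then w is fully covering (i.e. the number of reflections t with ℓ(wt) = ℓ(w) − 1 equals ℓ(w)) if and only if every line of the standard segment structure of Φ(w) has exactly two points; equivalently, if and only if for every pair of distinct roots α, β ∈ Φ(w), one has span{α, β} ∩ Φ(w) = {α, β}. -/

import Mathlib

/-!
Setup: a Coxeter system `cs : CoxeterSystem M W`, a real vector space `V` with a basis
`e : Basis B ℝ V` of simple roots, a symmetric bilinear form `BF` with
`BF (e i) (e j) = -cos (π / M i j)` (the convention `M i j = 0` means `∞`, and division by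
zero in `ℝ` gives `-cos 0 = -1`), and the geometric representation `ρ : W →* (V →ₗ[ℝ] V)`
determined by `ρ (s i) v = v - 2 ⟪α_i, v⟫ • α_i`.
-/

variable {B : Type*} {W : Type*} [Group W] {V : Type*} [AddCommGroup V] [Module ℝ V]

/-- The root system `Φ = {w • α_i}`. -/
def Phi (ρ : W →* V →ₗ[ℝ] V) (e : Module.Basis B ℝ V) : Set V :=
  {v | ∃ (w : W) (i : B), v = ρ w (e i)}

/-- The positive system `Φ⁺`: roots that are nonnegative combinations of the simple roots. -/
def PhiPos (ρ : W →* V →ₗ[ℝ] V) (e : Module.Basis B ℝ V) : Set V :=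
  {v | v ∈ Phi ρ e ∧ ∀ i : B, (0 : ℝ) ≤ e.repr v i}

/-- The negative system `Φ⁻ = -Φ⁺`. -/
def PhiNeg (ρ : W →* V →ₗ[ℝ] V) (e : Module.Basis B ℝ V) : Set V :=
  {v | -v ∈ PhiPos ρ e}

/-- The inversion set `Φ(w) = Φ⁺ ∩ w⁻¹ Φ⁻`. -/
def InvSet (ρ : W →* V →ₗ[ℝ] V) (e : Module.Basis B ℝ V) (w : W) : Set V :=
  {v | v ∈ PhiPos ρ e ∧ ρ w v ∈ PhiNeg ρ e}

/-- The root sequence `θ̄(x)` of a word `x = (s_1, …, s_n)`: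
`θ_k = s_n ⋯ s_{k+1} (α_{s_k})`. -/
noncomputable def rootSeq {M : CoxeterMatrix B} (cs : CoxeterSystem M W) (ρ : W →* V →ₗ[ℝ] V)
    (e : Module.Basis B ℝ V) : List B → List V
  | [] => []
  | i :: t => ρ (cs.wordProd t)⁻¹ (e i) :: rootSeq cs ρ e t

/-- The data `(e, BF, ρ)` forms the geometric representation of the Coxeter system `cs`. -/
def IsGeometricRep {M : CoxeterMatrix B} (cs : CoxeterSystem M W) (e : Module.Basis B ℝ V)
    (BF : LinearMap.BilinForm ℝ V) (ρ : W →* V →ₗ[ℝ] V) : Prop :=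
  (∀ u v : V, BF u v = BF v u) ∧
  (∀ i j : B, BF (e i) (e j) = - Real.cos (Real.pi / (M i j : ℝ))) ∧
  (∀ (i : B) (v : V), ρ (cs.simple i) v = v - (2 * BF (e i) v) • e i)


/-- The reflection `s_α` in a root `α`, acting on `V` by `s_α(v) = v - 2 B(v,α) α`. -/
def reflVec (BF : LinearMap.BilinForm ℝ V) (α v : V) : V :=
  v - (2 * BF v α) • α

/-- An *inversion set* is a subset of `Φ⁺` of the form `span{α,β} ∩ Φ⁺`, where `α, β` are
roots that are not scalar multiples of one another. -/
def IsInversionSet (ρ : W →* V →ₗ[ℝ] V) (e : Module.Basis B ℝ V) (Ψ : Set V) : Prop :=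
  ∃ α β : V, α ∈ Phi ρ e ∧ β ∈ Phi ρ e ∧ (¬ ∃ c : ℝ, β = c • α) ∧
    Ψ = ↑(Submodule.span ℝ ({α, β} : Set V)) ∩ PhiPos ρ e

/-- `γ` is a *canonical simple root* of `Ψ` if `γ ∈ Ψ` and whenever
`γ = a • μ + Σᵢ aᵢ • λᵢ` with `μ, λᵢ ∈ Ψ`, `a > 0` and `aᵢ ≥ 0`, then `μ = γ`. -/
def IsCanonicalSimpleRoot (Ψ : Set V) (γ : V) : Prop :=
  γ ∈ Ψ ∧ ∀ μ ∈ Ψ, ∀ a : ℝ, 0 < a → ∀ f : V →₀ ℝ,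
    (∀ v ∈ f.support, v ∈ Ψ) → (∀ v, 0 ≤ f v) →
    γ = a • μ + f.sum (fun v c => c • v) → μ = γ

/-- The lines of the standard segment structure of `Φ(w)`: the sets `Ψ ∩ Φ(w)` of
cardinality at least 2, as `Ψ` ranges over inversion sets. -/
def SegLines (ρ : W →* V →ₗ[ℝ] V) (e : Module.Basis B ℝ V) (w : W) : Set (Set V) :=
  {L | (∃ Ψ : Set V, IsInversionSet ρ e Ψ ∧ L = Ψ ∩ InvSet ρ e w) ∧
    ∃ x ∈ L, ∃ y ∈ L, x ≠ y}

/-!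
Let `t` be a reflection whose root `v` lies in `Φ(w)`, so that `ρ t` acts as
`s_v := reflVec BF v`. For `x ∈ Φ(t)` the roots `x` and `-s_v x` add up to a positive multiple of
`v`, so at least one of them lies in `Φ(w)`. Splitting `Φ(w t)` along `Φ(t)` then gives
`ℓ(w t) = ℓ(w) - #{x ∈ Φ(w) | -s_v x ∈ Φ(w)}`, a count that includes `v` itself. As the reflections `t` with `ℓ(w t) < ℓ(w)` correspond to the roots in `Φ(w)`, and
`|Φ(w)| = ℓ(w)`, `w` is fully covering iff no `x ≠ v` in `Φ(w)` has `-s_v x ∈ Φ(w)`.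

Such a pair `x, -s_v x` spans a line of `Φ(w)` containing the third point `v`. Conversely, of three
points of `Φ(w)` in a plane one lies between the other two, `γ = a α + b β` with `a, b > 0`; then
`-s_γ α` or `-s_γ β`, according to the sign of `2 a B(α, γ) - 1`, is a nonnegative combination of
`γ` and the remaining root, hence lies in `Φ(w)`.

The basic facts used (every root is positive or negative, `|Φ(w)| = ℓ(w)`, reflections correspond
to positive roots) are derived from the rank-two formula for `ρ(⋯ s_i s_j) α_i`.
-/

section Roots

variable {e : Module.Basis B ℝ V} {ρ : W →* V →ₗ[ℝ] V}

lemma rho_mem_phi {v : V} (hv : v ∈ Phi ρ e) (u : W) : ρ u v ∈ Phi ρ e := by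
  obtain ⟨w, i, rfl⟩ := hv
  exact ⟨u * w, i, by rw [map_mul, Module.End.mul_apply]⟩

lemma simple_mem_phiPos (i : B) : e i ∈ PhiPos ρ e := by
  classical
  refine ⟨⟨1, i, by simp⟩, fun j => ?_⟩
  rw [Module.Basis.repr_self, Finsupp.single_apply]
  split <;> norm_num

lemma neg_mem_phiNeg {v : V} (hv : v ∈ PhiPos ρ e) : -v ∈ PhiNeg ρ e := by
  simpa [PhiNeg] using hv

lemma rho_apply_rho_apply_of_mul_self {t : W} (ht : t * t = 1) (v : V) : ρ t (ρ t v) = v := by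
  rw [← Module.End.mul_apply, ← map_mul, ht, map_one, Module.End.one_apply]

lemma repr_nonpos_of_mem_phiNeg {v : V} (hv : v ∈ PhiNeg ρ e) (i : B) : e.repr v i ≤ 0 := by
  simpa using hv.2 i

lemma invSet_subset_phiPos (w : W) : InvSet ρ e w ⊆ PhiPos ρ e := fun _ hv => hv.1

end Roots

lemma span_pair_eq_of_linearIndependent {α β x y : V} (hx : x ∈ Submodule.span ℝ {α, β})
    (hy : y ∈ Submodule.span ℝ {α, β}) (hxy : LinearIndependent ℝ ![x, y]) :
    Submodule.span ℝ {x, y} = Submodule.span ℝ {α, β} := by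
  classical
  have := FiniteDimensional.span_of_finite ℝ (Set.toFinite {α, β})
  refine Submodule.eq_of_le_of_finrank_le
    (Submodule.span_le.mpr (Set.insert_subset hx (Set.singleton_subset_iff.mpr hy))) ?_
  calc Module.finrank ℝ (Submodule.span ℝ {α, β})
      ≤ ({α, β} : Set V).toFinset.card := finrank_span_le_card _
    _ ≤ 2 := by simpa [Set.toFinset_insert] using Finset.card_le_two
    _ = Module.finrank ℝ (Submodule.span ℝ {x, y}) := by
      rw [← Matrix.range_cons_cons_empty x y ![], finrank_span_eq_card hxy, Fintype.card_fin]

lemma pair_subset_span_pair_inter {S : Set V} {α β : V} (hα : α ∈ S) (hβ : β ∈ S) :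
    {α, β} ⊆ ↑(Submodule.span ℝ {α, β}) ∩ S :=
  Set.insert_subset ⟨Submodule.subset_span (by simp), hα⟩
    (Set.singleton_subset_iff.mpr ⟨Submodule.subset_span (by simp), hβ⟩)

noncomputable def chebSeq (lam : ℝ) : ℕ → ℝ
  | 0 => 0
  | 1 => 1
  | (n + 2) => lam * chebSeq lam (n + 1) - chebSeq lam n

lemma chebSeq_succ_succ (lam : ℝ) (n : ℕ) :
    chebSeq lam (n + 2) = lam * chebSeq lam (n + 1) - chebSeq lam n := rfl

lemma chebSeq_eq_sin {m : ℕ} (hm : 2 ≤ m) (n : ℕ) :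
    chebSeq (2 * Real.cos (Real.pi / m)) n =
      Real.sin (n * (Real.pi / m)) / Real.sin (Real.pi / m) := by
  have hθ : 0 < Real.pi / m := div_pos Real.pi_pos (by positivity)
  have hθπ : Real.pi / m < Real.pi := div_lt_self Real.pi_pos (by norm_cast)
  have hs : Real.sin (Real.pi / m) ≠ 0 := (Real.sin_pos_of_pos_of_lt_pi hθ hθπ).ne'
  induction n using Nat.twoStepInduction with
  | zero => simp [chebSeq]
  | one => simp [chebSeq, div_self hs]
  | more n ih1 ih2 =>
    rw [chebSeq_succ_succ, ih1, ih2]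
    have h1 : ((n + 2 : ℕ) : ℝ) * (Real.pi / m) = (n + 1 : ℕ) * (Real.pi / m) + Real.pi / m := by
      push_cast; ring
    have h2 : (n : ℝ) * (Real.pi / m) = (n + 1 : ℕ) * (Real.pi / m) - Real.pi / m := by
      push_cast; ring
    rw [h1, h2, Real.sin_add, Real.sin_sub]
    field_simp
    ring

lemma chebSeq_nonneg_of_le {m n : ℕ} (hm : 2 ≤ m) (hn : n ≤ m) :
    0 ≤ chebSeq (2 * Real.cos (Real.pi / m)) n := by
  have hθ : 0 < Real.pi / m := div_pos Real.pi_pos (by positivity)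
  rw [chebSeq_eq_sin hm]
  refine div_nonneg (Real.sin_nonneg_of_nonneg_of_le_pi (by positivity) ?_)
    (Real.sin_nonneg_of_nonneg_of_le_pi hθ.le (div_le_self Real.pi_pos.le (by norm_cast; omega)))
  calc (n : ℝ) * (Real.pi / m) ≤ m * (Real.pi / m) := by gcongr
    _ = Real.pi := by field_simp

lemma chebSeq_nonneg_of_two_le {lam : ℝ} (hlam : 2 ≤ lam) (n : ℕ) : 0 ≤ chebSeq lam n := by
  have key : ∀ n, 0 ≤ chebSeq lam n ∧ chebSeq lam n ≤ chebSeq lam (n + 1) := by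
    intro n
    induction n with
    | zero => simp [chebSeq]
    | succ n ih =>
      refine ⟨ih.1.trans ih.2, ?_⟩
      rw [chebSeq_succ_succ]
      nlinarith [ih.1, ih.2]
  exact (key n).1

namespace CoxeterSystem

variable {M : CoxeterMatrix B} (cs : CoxeterSystem M W)

local prefix:100 "s" => cs.simple
local prefix:100 "π" => cs.wordProd
local prefix:100 "ℓ" => cs.length

lemma length_lt_length_mul_simple_of_not_lt {w : W} {i : B} (hw : ¬ℓ (w * s i) < ℓ w) :
    ℓ w < ℓ (w * s i) :=
  lt_of_le_of_ne (not_lt.mp hw) (cs.length_mul_simple_ne w i).symm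

lemma exists_alternatingWord_factorization {w : W} {i j : B} (hj : ℓ (w * s j) < ℓ w) :
    ∃ v k, 1 ≤ k ∧ w = v * π (alternatingWord i j k) ∧ ℓ v + k = ℓ w ∧
      ℓ v < ℓ (v * s i) ∧ ℓ v < ℓ (v * s j) := by
  suffices H : ∀ n v k, ℓ v = n → 1 ≤ k → w = v * π (alternatingWord i j k) → ℓ v + k = ℓ w →
      ∃ v k, 1 ≤ k ∧ w = v * π (alternatingWord i j k) ∧ ℓ v + k = ℓ w ∧
        ℓ v < ℓ (v * s i) ∧ ℓ v < ℓ (v * s j) from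
    H _ (w * s j) 1 rfl le_rfl (by simp [alternatingWord, mul_assoc])
      (by have := cs.length_mul_simple w j; omega)
  intro n
  induction n using Nat.strong_induction_on with
  | _ n ih =>
  intro v k hv hk hw hlen
  -- Either `v` has a descent at the next letter of the alternating word, and we move it over,
  -- or `v` has ascents at both letters.
  by_cases hc : ℓ (v * s (if Even k then j else i)) < ℓ v
  · refine ih _ (hv ▸ hc) _ (k + 1) rfl (by omega) ?_ ?_
    · rw [alternatingWord_succ', wordProd_cons, mul_assoc, ← mul_assoc (s _),
        simple_mul_simple_self, one_mul, hw]
    · have := cs.length_mul_simple v (if Even k then j else i)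
      omega
  · have hc := cs.length_lt_length_mul_simple_of_not_lt hc
    obtain ⟨k, rfl⟩ : ∃ k', k = k' + 1 := ⟨k - 1, by omega⟩
    have hd : ℓ v < ℓ (v * s (if Even k then j else i)) := by
      have hw' : w = v * s (if Even k then j else i) * π (alternatingWord i j k) := by
        rw [hw, alternatingWord_succ', wordProd_cons, mul_assoc]
      have h1 := cs.length_mul_le (v * s (if Even k then j else i)) (π (alternatingWord i j k))
      have h2 := cs.length_wordProd_le (alternatingWord i j k)
      rw [← hw', length_alternatingWord] at *
      omega
    rcases Nat.even_or_odd k with hk | hk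
    · have hk1 : ¬Even (k + 1) := by simpa [Nat.even_add_one] using hk
      simp only [if_pos hk, if_neg hk1] at hc hd
      exact ⟨v, k + 1, by omega, hw, hlen, hc, hd⟩
    · have hk0 : ¬Even k := Nat.not_even_iff_odd.mpr hk
      have hk1 : Even (k + 1) := Nat.even_add_one.mpr hk0
      simp only [if_neg hk0, if_pos hk1] at hc hd
      exact ⟨v, k + 1, by omega, hw, hlen, hd, hc⟩

lemma lt_coxeterMatrix_of_factorization {w v : W} {i j : B} {k : ℕ} (hM : M i j ≠ 0)
    (hw : w = v * π (alternatingWord i j k)) (hlen : ℓ v + k = ℓ w) (hi : ℓ w < ℓ (w * s i)) :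
    k < M i j := by
  have hred : cs.IsReduced (alternatingWord i j k) := by
    have h1 := cs.length_mul_le v (π (alternatingWord i j k))
    have h2 := cs.length_wordProd_le (alternatingWord i j k)
    rw [← hw, length_alternatingWord] at *
    rw [IsReduced, length_alternatingWord]
    omega
  have hle : k ≤ M i j := not_lt.mp fun hgt => cs.not_isReduced_alternatingWord i j hM hgt hred
  refine lt_of_le_of_ne hle fun hkM => ?_
  obtain ⟨k, rfl⟩ : ∃ k', k = k' + 1 := ⟨k - 1, by omega⟩
  -- The braid relation turns `w * s i` into a shorter alternating product.
  have hws : w * s i = v * π (alternatingWord i j k) := by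
    have := cs.wordProd_braidWord_eq i j
    rw [braidWord, braidWord, ← hkM, M.symmetric, ← hkM, alternatingWord_succ j i,
      wordProd_concat] at this
    rw [hw, this, mul_assoc, mul_assoc, simple_mul_simple_self, mul_one]
  have h1 := cs.length_mul_le v (π (alternatingWord i j k))
  have h2 := cs.length_wordProd_le (alternatingWord i j k)
  rw [← hws] at h1
  rw [length_alternatingWord] at h2
  omega

end CoxeterSystem

namespace IsGeometricRep

open CoxeterSystem

variable {M : CoxeterMatrix B} {cs : CoxeterSystem M W} {e : Module.Basis B ℝ V}
  {BF : LinearMap.BilinForm ℝ V} {ρ : W →* V →ₗ[ℝ] V}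

local prefix:100 "s" => cs.simple
local prefix:100 "ℓ" => cs.length

lemma bf_symm (h : IsGeometricRep cs e BF ρ) (u v : V) : BF u v = BF v u := h.1 u v

lemma bf_self (h : IsGeometricRep cs e BF ρ) (i : B) : BF (e i) (e i) = 1 := by
  simp [h.2.1 i i]

lemma rho_simple_apply (h : IsGeometricRep cs e BF ρ) (i : B) (v : V) :
    ρ (s i) v = v - (2 * BF (e i) v) • e i := h.2.2 i v

lemma rho_simple_self (h : IsGeometricRep cs e BF ρ) (i : B) : ρ (s i) (e i) = -e i := by
  rw [h.rho_simple_apply, h.bf_self]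
  module

lemma rho_simple_apply_basis (h : IsGeometricRep cs e BF ρ) (i j : B) :
    ρ (s i) (e j) = e j + (2 * Real.cos (Real.pi / M i j)) • e i := by
  rw [h.rho_simple_apply, h.2.1 i j]
  module

lemma bf_rho_simple (h : IsGeometricRep cs e BF ρ) (i : B) (u v : V) :
    BF (ρ (s i) u) (ρ (s i) v) = BF u v := by
  simp only [h.rho_simple_apply, map_sub, map_smul, LinearMap.sub_apply, LinearMap.smul_apply,
    smul_eq_mul, h.bf_self, h.bf_symm u (e i)]
  ring

lemma bf_rho (h : IsGeometricRep cs e BF ρ) (w : W) (u v : V) :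
    BF (ρ w u) (ρ w v) = BF u v := by
  obtain ⟨ω, -, rfl⟩ := cs.exists_isReduced w
  induction ω generalizing u v with
  | nil => simp
  | cons i t ih =>
    rw [CoxeterSystem.wordProd_cons, map_mul, Module.End.mul_apply, Module.End.mul_apply,
      h.bf_rho_simple, ih]

lemma neg_mem_phi (h : IsGeometricRep cs e BF ρ) {v : V} (hv : v ∈ Phi ρ e) : -v ∈ Phi ρ e := by
  obtain ⟨w, i, rfl⟩ := hv
  exact ⟨w * s i, i, by rw [map_mul, Module.End.mul_apply, h.rho_simple_self, map_neg]⟩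

lemma bf_self_of_mem_phi (h : IsGeometricRep cs e BF ρ) {v : V} (hv : v ∈ Phi ρ e) :
    BF v v = 1 := by
  obtain ⟨w, i, rfl⟩ := hv
  rw [h.bf_rho, h.bf_self]

lemma ne_zero_of_mem_phi (h : IsGeometricRep cs e BF ρ) {v : V} (hv : v ∈ Phi ρ e) : v ≠ 0 := by
  rintro rfl
  simpa using h.bf_self_of_mem_phi hv

lemma not_mem_phiNeg_of_mem_phiPos (h : IsGeometricRep cs e BF ρ) {v : V}
    (hv : v ∈ PhiPos ρ e) : v ∉ PhiNeg ρ e := by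
  intro hneg
  apply h.ne_zero_of_mem_phi hv.1
  refine e.repr.map_eq_zero_iff.mp (Finsupp.ext fun i => le_antisymm ?_ (hv.2 i))
  simpa using hneg.2 i

lemma rho_alternatingWord_apply (h : IsGeometricRep cs e BF ρ) (i j : B) (k : ℕ) :
    ρ (cs.wordProd (alternatingWord i j k)) (e i) =
      (if Even k then chebSeq (2 * Real.cos (Real.pi / M i j)) (k + 1)
        else chebSeq (2 * Real.cos (Real.pi / M i j)) k) • e i +
      (if Even k then chebSeq (2 * Real.cos (Real.pi / M i j)) k
        else chebSeq (2 * Real.cos (Real.pi / M i j)) (k + 1)) • e j := by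
  induction k with
  | zero => simp [chebSeq, alternatingWord]
  | succ k ih =>
    rw [alternatingWord_succ', wordProd_cons, map_mul, Module.End.mul_apply, ih]
    rcases Nat.even_or_odd k with hk | hk
    · have hk1 : ¬Even (k + 1) := by simpa [Nat.even_add_one] using hk
      simp only [if_pos hk, if_neg hk1, map_add, map_smul, h.rho_simple_apply_basis j i,
        h.rho_simple_self, M.symmetric j i, chebSeq_succ_succ]
      module
    · have hk0 : ¬Even k := Nat.not_even_iff_odd.mpr hk
      have hk1 : Even (k + 1) := Nat.even_add_one.mpr hk0
      simp only [if_neg hk0, if_pos hk1, map_add, map_smul, h.rho_simple_apply_basis i j,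
        h.rho_simple_self, chebSeq_succ_succ]
      module

lemma rho_alternatingWord_apply_nonneg (h : IsGeometricRep cs e BF ρ) {i j : B} (hij : i ≠ j)
    {k : ℕ} (hk : k < M i j ∨ M i j = 0) :
    ∃ a b : ℝ, 0 ≤ a ∧ 0 ≤ b ∧
      ρ (cs.wordProd (alternatingWord i j k)) (e i) = a • e i + b • e j := by
  refine ⟨_, _, ?_, ?_, h.rho_alternatingWord_apply i j k⟩
  all_goals
    rcases hk with hk | hk
    · have hm : 2 ≤ M i j := by have := M.off_diagonal i j hij; omega
      split <;> exact chebSeq_nonneg_of_le hm (by omega)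
    · split <;> exact chebSeq_nonneg_of_two_le (by simp [hk]) _

theorem repr_rho_nonneg (h : IsGeometricRep cs e BF ρ) {w : W} {i : B} (hi : ℓ w < ℓ (w * s i))
    (b : B) : 0 ≤ e.repr (ρ w (e i)) b := by
  obtain ⟨n, hn⟩ : ∃ n, ℓ w = n := ⟨_, rfl⟩
  induction n using Nat.strong_induction_on generalizing w i with
  | _ n ih =>
  by_cases hw1 : w = 1
  · subst hw1
    simp only [map_one, Module.End.one_apply, Module.Basis.repr_self]
    exact Finsupp.single_nonneg.2 zero_le_one b
  obtain ⟨j, hj⟩ := cs.exists_rightDescent_of_ne_one hw1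
  have hij : i ≠ j := by
    rintro rfl
    exact lt_asymm hi hj
  obtain ⟨v, k, hk1, hw, hlen, hvi, hvj⟩ := cs.exists_alternatingWord_factorization (i := i) hj
  have hk : k < M i j ∨ M i j = 0 := by
    by_cases hM : M i j = 0
    · exact Or.inr hM
    · exact Or.inl (cs.lt_coxeterMatrix_of_factorization hM hw hlen hi)
  obtain ⟨a, c, ha, hc, hrho⟩ := h.rho_alternatingWord_apply_nonneg hij hk
  have hvi' := ih (ℓ v) (by omega) hvi rfl
  have hvj' := ih (ℓ v) (by omega) hvj rfl
  rw [hw, map_mul, Module.End.mul_apply, hrho]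
  simp only [map_add, map_smul, Finsupp.add_apply, Finsupp.smul_apply, smul_eq_mul]
  positivity

lemma mem_phiPos_of_lt (h : IsGeometricRep cs e BF ρ) {w : W} {i : B} (hi : ℓ w < ℓ (w * s i)) :
    ρ w (e i) ∈ PhiPos ρ e :=
  ⟨⟨w, i, rfl⟩, h.repr_rho_nonneg hi⟩

lemma mem_phiNeg_of_lt (h : IsGeometricRep cs e BF ρ) {w : W} {i : B} (hi : ℓ (w * s i) < ℓ w) :
    ρ w (e i) ∈ PhiNeg ρ e := by
  have hpos := h.mem_phiPos_of_lt (w := w * s i) (i := i) (by simpa [mul_assoc] using hi)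
  rwa [map_mul, Module.End.mul_apply, h.rho_simple_self, map_neg] at hpos

lemma mem_phiPos_or_mem_phiNeg (h : IsGeometricRep cs e BF ρ) {v : V} (hv : v ∈ Phi ρ e) :
    v ∈ PhiPos ρ e ∨ v ∈ PhiNeg ρ e := by
  obtain ⟨w, i, rfl⟩ := hv
  rcases Nat.lt_or_gt_of_ne (cs.length_mul_simple_ne w i) with hi | hi
  · exact Or.inr (h.mem_phiNeg_of_lt hi)
  · exact Or.inl (h.mem_phiPos_of_lt hi)

lemma mem_phiPos_of_not_mem_phiNeg (h : IsGeometricRep cs e BF ρ) {v : V} (hv : v ∈ Phi ρ e)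
    (hn : v ∉ PhiNeg ρ e) : v ∈ PhiPos ρ e :=
  (h.mem_phiPos_or_mem_phiNeg hv).resolve_right hn

lemma mem_phiNeg_of_repr_nonpos (h : IsGeometricRep cs e BF ρ) {v : V} (hv : v ∈ Phi ρ e)
    (hc : ∀ i, e.repr v i ≤ 0) : v ∈ PhiNeg ρ e :=
  ⟨h.neg_mem_phi hv, fun i => by simpa using hc i⟩

lemma eq_of_eq_smul (h : IsGeometricRep cs e BF ρ) {x y : V} (hx : x ∈ PhiPos ρ e)
    (hy : y ∈ PhiPos ρ e) {c : ℝ} (hc : y = c • x) : y = x := by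
  have hcc : c * c = 1 := by
    have := h.bf_self_of_mem_phi hy.1
    simp only [hc, map_smul, LinearMap.smul_apply, smul_eq_mul, h.bf_self_of_mem_phi hx.1] at this
    linarith
  rcases mul_self_eq_one_iff.mp hcc with rfl | rfl
  · rw [hc, one_smul]
  · rw [hc, neg_one_smul] at hy
    have hneg := neg_mem_phiNeg hy
    rw [neg_neg] at hneg
    exact absurd hneg (h.not_mem_phiNeg_of_mem_phiPos hx)

lemma rho_injective (h : IsGeometricRep cs e BF ρ) : Function.Injective ρ := by
  refine (injective_iff_map_eq_one ρ).mpr fun w hw => by_contra fun hne => ?_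
  obtain ⟨j, hj⟩ := cs.exists_rightDescent_of_ne_one hne
  have hneg := h.mem_phiNeg_of_lt hj
  rw [hw, Module.End.one_apply] at hneg
  exact h.not_mem_phiNeg_of_mem_phiPos (simple_mem_phiPos j) hneg

lemma rho_simple_mem_phiPos (h : IsGeometricRep cs e BF ρ) {i : B} {u : V}
    (hu : u ∈ PhiPos ρ e) (hne : u ≠ e i) : ρ (s i) u ∈ PhiPos ρ e := by
  -- `u` has a positive coordinate off `i` (it is not a multiple of `e i`), and `s i` keeps it.
  obtain ⟨j, hji, hj⟩ : ∃ j, j ≠ i ∧ e.repr u j ≠ 0 := by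
    by_contra! hall
    refine hne (h.eq_of_eq_smul (simple_mem_phiPos i) hu (c := e.repr u i) ?_)
    refine e.repr.injective (Finsupp.ext fun j => ?_)
    by_cases hji : j = i
    · simp [hji]
    · simp [hall j hji, Finsupp.single_eq_of_ne hji]
  refine h.mem_phiPos_of_not_mem_phiNeg (rho_mem_phi hu.1 _) fun hneg => hj ?_
  have hcoord := hneg.2 j
  rw [h.rho_simple_apply] at hcoord
  simp only [neg_sub, map_sub, map_smul, Module.Basis.repr_self, Finsupp.sub_apply,
    Finsupp.smul_apply, Finsupp.single_eq_of_ne hji, smul_zero, zero_sub] at hcoord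
  exact le_antisymm (by linarith) (hu.2 j)

lemma invSet_one (h : IsGeometricRep cs e BF ρ) : InvSet ρ e (1 : W) = ∅ :=
  Set.eq_empty_of_forall_notMem fun _ hv =>
    h.not_mem_phiNeg_of_mem_phiPos hv.1 (by simpa using hv.2)

lemma invSet_mul_simple (h : IsGeometricRep cs e BF ρ) {w : W} {i : B}
    (hi : ℓ w < ℓ (w * s i)) :
    InvSet ρ e (w * s i) = insert (e i) (ρ (s i) '' InvSet ρ e w) := by
  have hinv := rho_apply_rho_apply_of_mul_self (ρ := ρ) (cs.simple_mul_simple_self i)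
  ext v
  constructor
  · rintro ⟨hv, hneg⟩
    by_cases hvi : v = e i
    · exact Or.inl hvi
    · refine Or.inr ⟨ρ (s i) v, ⟨h.rho_simple_mem_phiPos hv hvi, ?_⟩, hinv v⟩
      rwa [map_mul, Module.End.mul_apply] at hneg
  · rintro (rfl | ⟨x, ⟨hx, hxneg⟩, rfl⟩)
    · refine ⟨simple_mem_phiPos i, ?_⟩
      rw [map_mul, Module.End.mul_apply, h.rho_simple_self, map_neg]
      exact neg_mem_phiNeg (h.mem_phiPos_of_lt hi)
    · have hxi : x ≠ e i := by
        rintro rfl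
        exact h.not_mem_phiNeg_of_mem_phiPos (h.mem_phiPos_of_lt hi) hxneg
      refine ⟨h.rho_simple_mem_phiPos hx hxi, ?_⟩
      rwa [map_mul, Module.End.mul_apply, hinv]

lemma invSet_finite_and_ncard (h : IsGeometricRep cs e BF ρ) (w : W) :
    (InvSet ρ e w).Finite ∧ (InvSet ρ e w).ncard = ℓ w := by
  obtain ⟨n, hn⟩ : ∃ n, ℓ w = n := ⟨_, rfl⟩
  induction n generalizing w with
  | zero =>
    rw [hn, cs.length_eq_zero_iff.mp hn, h.invSet_one]
    exact ⟨Set.finite_empty, Set.ncard_empty _⟩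
  | succ n ih =>
    have hw1 : w ≠ 1 := fun hw1 => by simp [hw1] at hn
    obtain ⟨i, hi : ℓ (w * s i) < ℓ w⟩ := cs.exists_rightDescent_of_ne_one hw1
    have hu : ℓ (w * s i) + 1 = ℓ w := (cs.length_mul_simple w i).resolve_left (by omega)
    obtain ⟨hfin, hcard⟩ := ih (w * s i) (by omega)
    have hw : w = w * s i * s i := by rw [mul_assoc, simple_mul_simple_self, mul_one]
    have hinv := rho_apply_rho_apply_of_mul_self (ρ := ρ) (cs.simple_mul_simple_self i)
    have hnot : e i ∉ ρ (s i) '' InvSet ρ e (w * s i) := by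
      rintro ⟨x, hx, hxi⟩
      rw [← hinv x, hxi, h.rho_simple_self] at hx
      exact h.not_mem_phiNeg_of_mem_phiPos hx.1 (neg_mem_phiNeg (simple_mem_phiPos i))
    rw [hw, h.invSet_mul_simple (by rw [← hw]; omega)]
    refine ⟨(hfin.image _).insert _, ?_⟩
    rw [Set.ncard_insert_of_notMem hnot (hfin.image _),
      Set.ncard_image_of_injective _ (Function.LeftInverse.injective hinv), hcard, ← hw]
    omega

lemma invSet_finite (h : IsGeometricRep cs e BF ρ) (w : W) : (InvSet ρ e w).Finite :=
  (h.invSet_finite_and_ncard w).1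

lemma ncard_invSet (h : IsGeometricRep cs e BF ρ) (w : W) : (InvSet ρ e w).ncard = ℓ w :=
  (h.invSet_finite_and_ncard w).2

lemma rho_conj_simple_apply (h : IsGeometricRep cs e BF ρ) (u : W) (i : B) (x : V) :
    ρ (u * s i * u⁻¹) x = reflVec BF (ρ u (e i)) x := by
  have hx : ρ u (ρ u⁻¹ x) = x := by
    rw [← Module.End.mul_apply, ← map_mul, mul_inv_cancel, map_one, Module.End.one_apply]
  rw [map_mul, map_mul, Module.End.mul_apply, Module.End.mul_apply, h.rho_simple_apply, map_sub,
    map_smul, hx, reflVec, ← h.bf_rho u, hx, h.bf_symm]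

lemma reflVec_self_of_mem_phi (h : IsGeometricRep cs e BF ρ) {v : V} (hv : v ∈ Phi ρ e) :
    reflVec BF v v = -v := by
  rw [reflVec, h.bf_self_of_mem_phi hv]
  module

lemma reflVec_mem_phi (h : IsGeometricRep cs e BF ρ) {v x : V} (hv : v ∈ Phi ρ e)
    (hx : x ∈ Phi ρ e) : reflVec BF v x ∈ Phi ρ e := by
  obtain ⟨u, i, rfl⟩ := hv
  rw [← h.rho_conj_simple_apply]
  exact rho_mem_phi hx _

lemma eq_of_reflVec_eq_neg (h : IsGeometricRep cs e BF ρ) {v x : V} (hv : v ∈ PhiPos ρ e)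
    (hx : x ∈ PhiPos ρ e) (hvx : reflVec BF v x = -x) : x = v := by
  refine h.eq_of_eq_smul hv hx (c := BF x v) ?_
  rw [reflVec] at hvx
  have : (2 : ℝ) • (x - BF x v • v) = 0 := by rw [← add_eq_zero_iff_eq_neg.mpr hvx]; module
  rw [smul_eq_zero, sub_eq_zero] at this
  exact this.resolve_left two_ne_zero

lemma exists_root_of_isReflection (h : IsGeometricRep cs e BF ρ) {t : W}
    (ht : cs.IsReflection t) : ∃ v ∈ PhiPos ρ e, ∀ x, ρ t x = reflVec BF v x := by
  obtain ⟨u, i, rfl⟩ := ht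
  rcases h.mem_phiPos_or_mem_phiNeg ⟨u, i, rfl⟩ with hpos | hneg
  · exact ⟨_, hpos, h.rho_conj_simple_apply u i⟩
  · refine ⟨_, hneg, fun x => ?_⟩
    rw [h.rho_conj_simple_apply, reflVec, reflVec]
    simp only [map_neg, smul_neg, neg_smul, neg_neg, mul_neg]

lemma exists_isReflection_of_mem_phiPos (h : IsGeometricRep cs e BF ρ) {v : V}
    (hv : v ∈ PhiPos ρ e) : ∃ t, cs.IsReflection t ∧ ∀ x, ρ t x = reflVec BF v x := by
  obtain ⟨u, i, rfl⟩ := hv.1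
  exact ⟨u * s i * u⁻¹, ⟨u, i, rfl⟩, h.rho_conj_simple_apply u i⟩

lemma eq_of_reflVec_eq (h : IsGeometricRep cs e BF ρ) {v v' : V} (hv : v ∈ PhiPos ρ e)
    (hv' : v' ∈ PhiPos ρ e) (hvv' : ∀ x, reflVec BF v x = reflVec BF v' x) : v = v' :=
  h.eq_of_reflVec_eq_neg hv' hv (by rw [← hvv', h.reflVec_self_of_mem_phi hv.1])

lemma exists_repr_pos (h : IsGeometricRep cs e BF ρ) {p : V} (hp : p ∈ PhiPos ρ e) :
    ∃ b, 0 < e.repr p b := by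
  by_contra! hall
  exact h.ne_zero_of_mem_phi hp.1
    (e.repr.map_eq_zero_iff.mp (Finsupp.ext fun b => le_antisymm (hall b) (hp.2 b)))

lemma pos_of_add_eq_smul (h : IsGeometricRep cs e BF ρ) {p q r : V} (hp : p ∈ PhiPos ρ e)
    (hq : q ∈ PhiPos ρ e) (hr : r ∈ PhiPos ρ e) {c : ℝ} (hc : p + q = c • r) : 0 < c := by
  obtain ⟨b, hb⟩ := h.exists_repr_pos hp
  have hcb := congrArg (fun x => e.repr x b) hc
  simp only [map_add, map_smul, Finsupp.add_apply, Finsupp.smul_apply, smul_eq_mul] at hcb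
  by_contra! hc0
  nlinarith [hq.2 b, hr.2 b]

lemma mem_invSet_of_eq_add (h : IsGeometricRep cs e BF ρ) {w : W} {x y z : V}
    (hx : x ∈ InvSet ρ e w) (hy : y ∈ InvSet ρ e w) (hz : z ∈ Phi ρ e) {a b : ℝ} (ha : 0 ≤ a)
    (hb : 0 ≤ b) (hzxy : z = a • x + b • y) : z ∈ InvSet ρ e w := by
  refine ⟨⟨hz, fun i => ?_⟩, h.mem_phiNeg_of_repr_nonpos (rho_mem_phi hz w) fun i => ?_⟩
  · have := hx.1.2 i
    have := hy.1.2 i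
    simp only [hzxy, map_add, map_smul, Finsupp.add_apply, Finsupp.smul_apply, smul_eq_mul]
    positivity
  · have := repr_nonpos_of_mem_phiNeg hx.2 i
    have := repr_nonpos_of_mem_phiNeg hy.2 i
    simp only [hzxy, map_add, map_smul, Finsupp.add_apply, Finsupp.smul_apply, smul_eq_mul]
    nlinarith

lemma mem_invSet_or_mem_invSet (h : IsGeometricRep cs e BF ρ) {w : W} {x y v : V}
    (hx : x ∈ PhiPos ρ e) (hy : y ∈ PhiPos ρ e) (hv : v ∈ InvSet ρ e w) {c : ℝ}
    (hxy : x + y = c • v) : x ∈ InvSet ρ e w ∨ y ∈ InvSet ρ e w := by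
  by_contra! hnot
  have hwx := h.mem_phiPos_of_not_mem_phiNeg (rho_mem_phi hx.1 w) fun hn => hnot.1 ⟨hx, hn⟩
  have hwy := h.mem_phiPos_of_not_mem_phiNeg (rho_mem_phi hy.1 w) fun hn => hnot.2 ⟨hy, hn⟩
  -- `c` is positive, yet `w` maps `x + y = c • v` to a sum of positive roots equal to `c • ρ w v`
  -- with `ρ w v` negative.
  have hc := h.pos_of_add_eq_smul hx hy hv.1 hxy
  have hc' := h.pos_of_add_eq_smul hwx hwy hv.2 (c := -c)
    (by rw [← map_add, hxy, map_smul, neg_smul_neg])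
  linarith

lemma invSet_mul_reflection (h : IsGeometricRep cs e BF ρ) {w t : W} (ht : cs.IsReflection t)
    {v : V} (hv : v ∈ InvSet ρ e w) (hvt : ∀ x, ρ t x = reflVec BF v x) :
    InvSet ρ e (w * t) = ρ t '' (InvSet ρ e w \ InvSet ρ e t) ∪
      ((InvSet ρ e w ∩ InvSet ρ e t) \ {x | -ρ t x ∈ InvSet ρ e w}) := by
  have hinv := rho_apply_rho_apply_of_mul_self (ρ := ρ) ht.mul_self
  have hwt : ∀ x, ρ (w * t) x = ρ w (ρ t x) := fun x => by rw [map_mul, Module.End.mul_apply]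
  ext y
  simp only [Set.mem_union, Set.mem_image, Set.mem_sdiff, Set.mem_inter_iff, Set.mem_ofPred_eq]
  constructor
  · rintro ⟨hy, hyneg⟩
    rw [hwt] at hyneg
    by_cases hyt : y ∈ InvSet ρ e t
    · have hσw : -ρ t y ∉ InvSet ρ e w := fun hσ =>
        h.not_mem_phiNeg_of_mem_phiPos (by rwa [map_neg]) hσ.2
      have hyw := (h.mem_invSet_or_mem_invSet hy hyt.2 hv (c := 2 * BF y v)
        (by rw [hvt, reflVec]; abel)).resolve_right hσw
      exact Or.inr ⟨⟨hyw, hyt⟩, hσw⟩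
    · have hty := h.mem_phiPos_of_not_mem_phiNeg (rho_mem_phi hy.1 t) fun hn => hyt ⟨hy, hn⟩
      refine Or.inl ⟨ρ t y, ⟨⟨hty, hyneg⟩, fun hty' => ?_⟩, hinv y⟩
      exact h.not_mem_phiNeg_of_mem_phiPos hy (hinv y ▸ hty'.2)
  · rintro (⟨x, ⟨⟨hx, hxneg⟩, hxt⟩, rfl⟩ | ⟨⟨hyw, hyt⟩, hσ⟩)
    · refine ⟨h.mem_phiPos_of_not_mem_phiNeg (rho_mem_phi hx.1 t) fun hn => hxt ⟨hx, hn⟩, ?_⟩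
      rwa [hwt, hinv]
    · refine ⟨hyw.1, ?_⟩
      have hwσ := h.mem_phiPos_of_not_mem_phiNeg (rho_mem_phi hyt.2.1 w) fun hn => hσ ⟨hyt.2, hn⟩
      rw [map_neg] at hwσ
      rw [hwt]
      exact hwσ

lemma length_mul_reflection_add_ncard (h : IsGeometricRep cs e BF ρ) {w t : W}
    (ht : cs.IsReflection t) {v : V} (hv : v ∈ InvSet ρ e w) (hvt : ∀ x, ρ t x = reflVec BF v x) :
    ℓ (w * t) + {x ∈ InvSet ρ e w | -ρ t x ∈ InvSet ρ e w}.ncard = ℓ w := by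
  have hinv := rho_apply_rho_apply_of_mul_self (ρ := ρ) ht.mul_self
  have hfin := h.invSet_finite w
  set A := InvSet ρ e w
  set T := InvSet ρ e t
  set S := {x | -ρ t x ∈ A}
  have hdisj : Disjoint (ρ t '' (A \ T)) ((A ∩ T) \ S) := by
    refine Set.disjoint_left.mpr ?_
    rintro _ ⟨x, ⟨hxA, -⟩, rfl⟩ ⟨⟨-, htx⟩, -⟩
    exact h.not_mem_phiNeg_of_mem_phiPos hxA.1 (hinv x ▸ htx.2)
  have hD : A ∩ T ∩ S = {x ∈ A | -ρ t x ∈ A} := by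
    ext x
    exact ⟨fun ⟨⟨hx, _⟩, hσ⟩ => ⟨hx, hσ⟩, fun ⟨hx, hσ⟩ => ⟨⟨hx, hx.1, hσ.1⟩, hσ⟩⟩
  have hAT := Set.ncard_inter_add_ncard_sdiff_eq_ncard A T hfin
  have hATS := Set.ncard_inter_add_ncard_sdiff_eq_ncard (A ∩ T) S (hfin.inter_of_left _)
  rw [hD] at hATS
  rw [← h.ncard_invSet, ← show A.ncard = ℓ w from h.ncard_invSet w,
    h.invSet_mul_reflection ht hv hvt,
    Set.ncard_union_eq hdisj (hfin.sdiff.image _) (hfin.inter_of_left _).sdiff,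
    Set.ncard_image_of_injective _ (Function.LeftInverse.injective hinv)]
  omega

lemma length_mul_reflection_add_one_eq_iff (h : IsGeometricRep cs e BF ρ) {w t : W}
    (ht : cs.IsReflection t) {v : V} (hv : v ∈ InvSet ρ e w) (hvt : ∀ x, ρ t x = reflVec BF v x) :
    ℓ (w * t) + 1 = ℓ w ↔ ∀ x ∈ InvSet ρ e w, -reflVec BF v x ∈ InvSet ρ e w → x = v := by
  have key := h.length_mul_reflection_add_ncard ht hv hvt
  simp only [hvt] at key
  set D := {x ∈ InvSet ρ e w | -reflVec BF v x ∈ InvSet ρ e w}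
  have hvD : v ∈ D := ⟨hv, by rwa [h.reflVec_self_of_mem_phi hv.1.1, neg_neg]⟩
  constructor
  · intro hlen x hx hσx
    obtain ⟨a, ha⟩ := Set.ncard_eq_one.mp (show D.ncard = 1 by omega)
    have hxD : x ∈ D := ⟨hx, hσx⟩
    rw [ha] at hvD hxD
    exact hxD.trans hvD.symm
  · intro hall
    rw [Set.eq_singleton_iff_unique_mem.mpr ⟨hvD, fun x hx => hall x hx.1 hx.2⟩,
      Set.ncard_singleton] at key
    exact key

lemma mem_invSet_iff_length_mul_lt (h : IsGeometricRep cs e BF ρ) {w t : W}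
    (ht : cs.IsReflection t) {v : V} (hv : v ∈ PhiPos ρ e) (hvt : ∀ x, ρ t x = reflVec BF v x) :
    v ∈ InvSet ρ e w ↔ ℓ (w * t) < ℓ w := by
  have hdesc : ∀ u, v ∈ InvSet ρ e u → ℓ (u * t) < ℓ u := fun u hu => by
    have key := h.length_mul_reflection_add_ncard ht hu hvt
    have hpos : 0 < {x ∈ InvSet ρ e u | -ρ t x ∈ InvSet ρ e u}.ncard :=
      (Set.ncard_pos ((h.invSet_finite u).subset (Set.sep_subset _ _))).mpr
        ⟨v, hu, by rwa [hvt, h.reflVec_self_of_mem_phi hv.1, neg_neg]⟩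
    omega
  refine ⟨hdesc w, fun hlt => by_contra fun hvw => ?_⟩
  have hwv := h.mem_phiPos_of_not_mem_phiNeg (rho_mem_phi hv.1 w) fun hn => hvw ⟨hv, hn⟩
  have hvwt : v ∈ InvSet ρ e (w * t) := by
    refine ⟨hv, ?_⟩
    rw [map_mul, Module.End.mul_apply, hvt, h.reflVec_self_of_mem_phi hv.1, map_neg]
    exact neg_mem_phiNeg hwv
  have := hdesc _ hvwt
  rw [mul_assoc, ht.mul_self, mul_one] at this
  omega

lemma exists_bijOn_invSet (h : IsGeometricRep cs e BF ρ) (w : W) :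
    ∃ f : W → V, Set.BijOn f {t | cs.IsReflection t ∧ ℓ (w * t) < ℓ w} (InvSet ρ e w) := by
  have hex : ∀ t, ∃ v, cs.IsReflection t → v ∈ PhiPos ρ e ∧ ∀ x, ρ t x = reflVec BF v x := by
    intro t
    by_cases ht : cs.IsReflection t
    · obtain ⟨v, hv, hvt⟩ := h.exists_root_of_isReflection ht
      exact ⟨v, fun _ => ⟨hv, hvt⟩⟩
    · exact ⟨0, fun ht' => absurd ht' ht⟩
  choose root hroot using hex
  refine ⟨root, fun t ⟨ht, hlt⟩ => ?_, fun t ⟨ht, _⟩ t' ⟨ht', _⟩ heq => ?_, fun v hv => ?_⟩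
  · exact (h.mem_invSet_iff_length_mul_lt ht (hroot t ht).1 (hroot t ht).2).mpr hlt
  · refine h.rho_injective (LinearMap.ext fun x => ?_)
    rw [(hroot t ht).2, (hroot t' ht').2, heq]
  · obtain ⟨t, ht, hvt⟩ := h.exists_isReflection_of_mem_phiPos hv.1
    refine ⟨t, ⟨ht, (h.mem_invSet_iff_length_mul_lt ht hv.1 hvt).mp hv⟩, ?_⟩
    exact h.eq_of_reflVec_eq (hroot t ht).1 hv.1 fun x => by rw [← (hroot t ht).2, hvt]

lemma ncard_covers_eq_length_iff (h : IsGeometricRep cs e BF ρ) (w : W) :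
    {t | cs.IsReflection t ∧ ℓ (w * t) + 1 = ℓ w}.ncard = ℓ w ↔
      ∀ t, cs.IsReflection t → ℓ (w * t) < ℓ w → ℓ (w * t) + 1 = ℓ w := by
  obtain ⟨f, hf⟩ := h.exists_bijOn_invSet w
  have hcard := hf.ncard_eq.trans (h.ncard_invSet w)
  have hfin := hf.finite_iff_finite.mpr (h.invSet_finite w)
  have hsub : {t | cs.IsReflection t ∧ ℓ (w * t) + 1 = ℓ w} ⊆
      {t | cs.IsReflection t ∧ ℓ (w * t) < ℓ w} := fun t ⟨ht, hlen⟩ => ⟨ht, by omega⟩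
  constructor
  · intro hcov t ht hlt
    have heq := Set.eq_of_subset_of_ncard_le hsub (by rw [hcard, hcov]) hfin
    exact ((Set.ext_iff.mp heq t).mpr ⟨ht, hlt⟩).2
  · intro hall
    refine Eq.trans (congrArg Set.ncard ?_) hcard
    exact Set.Subset.antisymm hsub fun t ⟨ht, hlt⟩ => ⟨ht, hall t ht hlt⟩

theorem ncard_covers_eq_length_iff_neg_reflVec (h : IsGeometricRep cs e BF ρ) (w : W) :
    {t | cs.IsReflection t ∧ ℓ (w * t) + 1 = ℓ w}.ncard = ℓ w ↔
      ∀ v ∈ InvSet ρ e w, ∀ x ∈ InvSet ρ e w, -reflVec BF v x ∈ InvSet ρ e w → x = v := by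
  rw [h.ncard_covers_eq_length_iff]
  constructor
  · intro hcov v hv
    obtain ⟨t, ht, hvt⟩ := h.exists_isReflection_of_mem_phiPos hv.1
    exact (h.length_mul_reflection_add_one_eq_iff ht hv hvt).mp
      (hcov t ht ((h.mem_invSet_iff_length_mul_lt ht hv.1 hvt).mp hv))
  · intro hall t ht hlt
    obtain ⟨v, hv, hvt⟩ := h.exists_root_of_isReflection ht
    have hvw := (h.mem_invSet_iff_length_mul_lt ht hv hvt).mpr hlt
    exact (h.length_mul_reflection_add_one_eq_iff ht hvw hvt).mpr (hall v hvw)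

lemma exists_eq_add_of_mem_span (h : IsGeometricRep cs e BF ρ) {S : Set V}
    (hS : S ⊆ PhiPos ρ e) {x y z : V} (hx : x ∈ S) (hy : y ∈ S) (hz : z ∈ S) (hxy : x ≠ y)
    (hxz : x ≠ z) (hyz : y ≠ z) (hspan : z ∈ Submodule.span ℝ {x, y}) :
    ∃ α ∈ S, ∃ β ∈ S, ∃ γ ∈ S, α ≠ γ ∧ β ≠ γ ∧
      ∃ a b : ℝ, 0 < a ∧ 0 < b ∧ γ = a • α + b • β := by
  obtain ⟨a, b, hab⟩ := Submodule.mem_span_pair.mp hspan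
  have ha0 : a ≠ 0 := by
    rintro rfl
    exact hyz (h.eq_of_eq_smul (hS hy) (hS hz) (by rw [← hab, zero_smul, zero_add])).symm
  have hb0 : b ≠ 0 := by
    rintro rfl
    exact hxz (h.eq_of_eq_smul (hS hx) (hS hz) (by rw [← hab, zero_smul, add_zero])).symm
  rcases ha0.lt_or_gt with ha | ha <;> rcases hb0.lt_or_gt with hb | hb
  · -- `z` would have only nonpositive coordinates
    obtain ⟨i, hi⟩ := h.exists_repr_pos (hS hz)
    have := (hS hx).2 i
    have := (hS hy).2 i
    rw [← hab] at hi
    simp only [map_add, map_smul, Finsupp.add_apply, Finsupp.smul_apply, smul_eq_mul] at hi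
    nlinarith
  · refine ⟨z, hz, x, hx, y, hy, hyz.symm, hxy, b⁻¹, -a / b, by positivity,
      div_pos (neg_pos.mpr ha) hb, ?_⟩
    rw [← hab]
    match_scalars <;> field_simp
    ring
  · refine ⟨z, hz, y, hy, x, hx, hxz.symm, hxy.symm, a⁻¹, -b / a, by positivity,
      div_pos (neg_pos.mpr hb) ha, ?_⟩
    rw [← hab]
    match_scalars <;> field_simp
    ring
  · exact ⟨x, hx, y, hy, z, hz, hxz, hyz, a, b, ha, hb, hab.symm⟩

lemma exists_neg_reflVec_mem_invSet (h : IsGeometricRep cs e BF ρ) {w : W} {α β γ : V}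
    (hα : α ∈ InvSet ρ e w) (hβ : β ∈ InvSet ρ e w) (hγ : γ ∈ InvSet ρ e w) (hαγ : α ≠ γ)
    (hβγ : β ≠ γ) {a b : ℝ} (ha : 0 < a) (hb : 0 < b) (hγαβ : γ = a • α + b • β) :
    ∃ x ∈ InvSet ρ e w, x ≠ γ ∧ -reflVec BF γ x ∈ InvSet ρ e w := by
  have hroot : ∀ x ∈ InvSet ρ e w, -reflVec BF γ x ∈ Phi ρ e := fun x hx =>
    h.neg_mem_phi (h.reflVec_mem_phi hγ.1.1 hx.1.1)
  obtain ⟨c, hc⟩ : ∃ c, 2 * BF α γ = c := ⟨_, rfl⟩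
  obtain ⟨d, hd⟩ : ∃ d, 2 * BF β γ = d := ⟨_, rfl⟩
  have hcd : a * c + b * d = 2 := by
    have hγγ := h.bf_self_of_mem_phi hγ.1.1
    nth_rewrite 1 [hγαβ] at hγγ
    simp only [map_add, map_smul, LinearMap.add_apply, LinearMap.smul_apply, smul_eq_mul] at hγγ
    linear_combination 2 * hγγ - a * hc - b * hd
  by_cases hac : 1 ≤ a * c
  · refine ⟨α, hα, hαγ, h.mem_invSet_of_eq_add hγ hβ (hroot α hα)
      (a := (a * c - 1) / a) (b := b / a) (div_nonneg (by linarith) ha.le) (by positivity) ?_⟩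
    rw [reflVec, hc, hγαβ]
    match_scalars <;> field_simp <;> ring
  · refine ⟨β, hβ, hβγ, h.mem_invSet_of_eq_add hγ hα (hroot β hβ)
      (a := (1 - a * c) / b) (b := a / b) (div_nonneg (by linarith) hb.le) (by positivity) ?_⟩
    rw [reflVec, hd, hγαβ]
    match_scalars <;> field_simp <;> linear_combination hcd

lemma linearIndependent_pair (h : IsGeometricRep cs e BF ρ) {x y : V} (hx : x ∈ PhiPos ρ e)
    (hy : y ∈ PhiPos ρ e) (hxy : x ≠ y) : LinearIndependent ℝ ![x, y] :=
  (LinearIndependent.pair_iff' (h.ne_zero_of_mem_phi hx.1)).mpr fun _ hax =>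
    hxy (h.eq_of_eq_smul hx hy hax.symm).symm

lemma span_pair_inter_invSet_mem_segLines (h : IsGeometricRep cs e BF ρ) {w : W} {x y : V}
    (hx : x ∈ InvSet ρ e w) (hy : y ∈ InvSet ρ e w) (hxy : x ≠ y) :
    ↑(Submodule.span ℝ {x, y}) ∩ InvSet ρ e w ∈ SegLines ρ e w := by
  have hxyL := pair_subset_span_pair_inter hx hy
  refine ⟨⟨↑(Submodule.span ℝ {x, y}) ∩ PhiPos ρ e, ⟨x, y, hx.1.1, hy.1.1,
    fun ⟨c, hc⟩ => hxy (h.eq_of_eq_smul hx.1 hy.1 hc).symm, rfl⟩, ?_⟩,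
    x, hxyL (by simp), y, hxyL (by simp), hxy⟩
  rw [Set.inter_assoc, Set.inter_eq_right.mpr (invSet_subset_phiPos w)]

lemma exists_eq_span_pair_inter_of_mem_segLines (h : IsGeometricRep cs e BF ρ) {w : W}
    {L : Set V} (hL : L ∈ SegLines ρ e w) :
    ∃ x ∈ InvSet ρ e w, ∃ y ∈ InvSet ρ e w, x ≠ y ∧
      L = ↑(Submodule.span ℝ {x, y}) ∩ InvSet ρ e w := by
  obtain ⟨⟨Ψ, ⟨α, β, -, -, -, rfl⟩, rfl⟩, x, ⟨⟨hxs, -⟩, hx⟩, y, ⟨⟨hys, -⟩, hy⟩, hxy⟩ := hL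
  refine ⟨x, hx, y, hy, hxy, ?_⟩
  rw [span_pair_eq_of_linearIndependent hxs hys (h.linearIndependent_pair hx.1 hy.1 hxy),
    Set.inter_assoc, Set.inter_eq_right.mpr (invSet_subset_phiPos w)]

lemma forall_segLines_ncard_iff (h : IsGeometricRep cs e BF ρ) (w : W) :
    (∀ L ∈ SegLines ρ e w, L.ncard = 2) ↔
      ∀ α ∈ InvSet ρ e w, ∀ β ∈ InvSet ρ e w, α ≠ β →
        ↑(Submodule.span ℝ {α, β}) ∩ InvSet ρ e w = {α, β} := by
  constructor
  · intro hL α hα β hβ hαβ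
    refine (Set.eq_of_subset_of_ncard_le (pair_subset_span_pair_inter hα hβ) ?_
      ((h.invSet_finite w).inter_of_right _)).symm
    rw [hL _ (h.span_pair_inter_invSet_mem_segLines hα hβ hαβ), Set.ncard_pair hαβ]
  · intro hline L hL
    obtain ⟨x, hx, y, hy, hxy, rfl⟩ := h.exists_eq_span_pair_inter_of_mem_segLines hL
    rw [hline x hx y hy hxy, Set.ncard_pair hxy]

lemma exists_neg_reflVec_mem_invSet_of_mem_span (h : IsGeometricRep cs e BF ρ) {w : W}
    {α β γ : V} (hα : α ∈ InvSet ρ e w) (hβ : β ∈ InvSet ρ e w) (hγ : γ ∈ InvSet ρ e w)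
    (hαβ : α ≠ β) (hαγ : α ≠ γ) (hβγ : β ≠ γ) (hγαβ : γ ∈ Submodule.span ℝ {α, β}) :
    ∃ v ∈ InvSet ρ e w, ∃ x ∈ InvSet ρ e w, x ≠ v ∧ -reflVec BF v x ∈ InvSet ρ e w := by
  obtain ⟨α', hα', β', hβ', γ', hγ', hα'γ', hβ'γ', a, b, ha, hb, hγ'α'β'⟩ :=
    h.exists_eq_add_of_mem_span (invSet_subset_phiPos w) hα hβ hγ hαβ hαγ hβγ hγαβ
  exact ⟨γ', hγ', h.exists_neg_reflVec_mem_invSet hα' hβ' hγ' hα'γ' hβ'γ' ha hb hγ'α'β'⟩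

lemma mem_span_pair_neg_reflVec (h : IsGeometricRep cs e BF ρ) {v x : V} (hv : v ∈ PhiPos ρ e)
    (hx : x ∈ PhiPos ρ e) (hσx : -reflVec BF v x ∈ PhiPos ρ e) :
    v ∈ Submodule.span ℝ {x, -reflVec BF v x} := by
  have hsum : x + -reflVec BF v x = (2 * BF x v) • v := by
    rw [reflVec]
    abel
  have hc := h.pos_of_add_eq_smul hx hσx hv hsum
  refine Submodule.mem_span_pair.mpr ⟨(2 * BF x v)⁻¹, (2 * BF x v)⁻¹, ?_⟩
  rw [← smul_add, hsum, smul_smul, inv_mul_cancel₀ hc.ne', one_smul]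

lemma eq_of_neg_reflVec_eq (h : IsGeometricRep cs e BF ρ) {v x : V} (hv : v ∈ PhiPos ρ e)
    (hx : x ∈ PhiPos ρ e) (hvx : -reflVec BF v x = v) : x = v := by
  refine h.eq_of_eq_smul hv hx (c := 2 * BF x v - 1) ?_
  rw [reflVec] at hvx
  linear_combination (norm := module) -hvx

lemma forall_neg_reflVec_mem_iff (h : IsGeometricRep cs e BF ρ) (w : W) :
    (∀ v ∈ InvSet ρ e w, ∀ x ∈ InvSet ρ e w, -reflVec BF v x ∈ InvSet ρ e w → x = v) ↔
      ∀ α ∈ InvSet ρ e w, ∀ β ∈ InvSet ρ e w, α ≠ β →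
        ↑(Submodule.span ℝ {α, β}) ∩ InvSet ρ e w = {α, β} := by
  constructor
  · intro hall α hα β hβ hαβ
    refine Set.Subset.antisymm (fun γ ⟨hγs, hγ⟩ => by_contra fun hγαβ => ?_)
      (pair_subset_span_pair_inter hα hβ)
    simp only [Set.mem_insert_iff, Set.mem_singleton_iff, not_or] at hγαβ
    obtain ⟨v, hv, x, hx, hxv, hσx⟩ := h.exists_neg_reflVec_mem_invSet_of_mem_span hα hβ hγ hαβ
      (Ne.symm hγαβ.1) (Ne.symm hγαβ.2) hγs
    exact hxv (hall v hv x hx hσx)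
  · intro hline v hv x hx hσx
    by_contra hxv
    have hxσ : x ≠ -reflVec BF v x := fun hxσ =>
      hxv (h.eq_of_reflVec_eq_neg hv.1 hx.1 (neg_eq_iff_eq_neg.mpr hxσ).symm)
    have hv' : v ∈ ({x, -reflVec BF v x} : Set V) := by
      rw [← hline x hx _ hσx hxσ]
      exact ⟨h.mem_span_pair_neg_reflVec hv.1 hx.1 hσx.1, hv⟩
    rcases hv' with rfl | hvσ
    · exact hxv rfl
    · exact hxv (h.eq_of_neg_reflVec_eq hv.1 hx.1 hvσ.symm)

end IsGeometricRep

/-- `w` is fully covering (the number of reflections `t` with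
`ℓ(wt) = ℓ(w) − 1` equals `ℓ(w)`) iff every line of the standard segment structure of
`Φ(w)` has exactly two points; equivalently, iff for every pair of distinct roots
`α, β ∈ Φ(w)` one has `span{α,β} ∩ Φ(w) = {α, β}`. -/
theorem fullyCovering_iff_lines_two_points
    {M : CoxeterMatrix B} (cs : CoxeterSystem M W) (e : Module.Basis B ℝ V)
    (BF : LinearMap.BilinForm ℝ V) (ρ : W →* V →ₗ[ℝ] V)
    (hgeo : IsGeometricRep cs e BF ρ) (w : W) :
    (Set.ncard {t : W | cs.IsReflection t ∧ cs.length (w * t) + 1 = cs.length w}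
          = cs.length w ↔
        ∀ L ∈ SegLines ρ e w, L.ncard = 2) ∧
      (Set.ncard {t : W | cs.IsReflection t ∧ cs.length (w * t) + 1 = cs.length w}
          = cs.length w ↔
        ∀ α ∈ InvSet ρ e w, ∀ β ∈ InvSet ρ e w, α ≠ β →
          ↑(Submodule.span ℝ ({α, β} : Set V)) ∩ InvSet ρ e w = {α, β}) := by
  have hlines :=
    (hgeo.ncard_covers_eq_length_iff_neg_reflVec w).trans (hgeo.forall_neg_reflVec_mem_iff w)
  exact ⟨hlines.trans (hgeo.forall_segLines_ncard_iff w).symm, hlines⟩
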